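/- arXiv:1411.7777 — 11 statements merged into one kernel-verified Lean document; each statement's English description precedes it below -/
import Mathlib

section
/- Every AG**-groupoid is paramedial: if a groupoid G satisfies (a·b)·c = (c·b)·a and a·(b·c) = b·(a·c) for all a,b,c, then (a·b)·(c·d) = (d·b)·(c·a) for all a,b,c,d. -/
theorem agss_paramedial {G : Type*} (mul : G → G → G)
    (hAG : ∀ a b c, mul (mul a b) c = mul (mul c b) a)
    (hSS : ∀ a b c, mul a (mul b c) = mul b (mul a c)) :
    ∀ a b c d, mul (mul a b) (mul c d) = mul (mul d b) (mul c a) := by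
  intro a b c d
  rw [hSS (mul a b) c d, hAG a b d, ← hSS (mul d b) c a]
end

section
/- In an AG**-quasigroup, the map a ↦ a/a is constant; that is, for all a, b we have a/a = b/b. -/
theorem agss_div_constant {G : Type*} (mul div : G → G → G)
    (hAG : ∀ a b c, mul (mul a b) c = mul (mul c b) a)
    (hSS : ∀ a b c, mul a (mul b c) = mul b (mul a c))
    (hdiv1 : ∀ a b, mul (div b a) a = b)
    (hdiv2 : ∀ a b, div (mul b a) a = b) :
    ∀ a b, div a a = div b b := by
  intro a b
  have ea : mul (div a a) a = a := hdiv1 a a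
  have hleft : ∀ x, mul (div a a) x = x := by
    intro x
    have hx := hdiv1 a x
    calc mul (div a a) x = mul (div a a) (mul (div x a) a) := by rw [hx]
      _ = mul (div x a) (mul (div a a) a) := hSS _ _ _
      _ = mul (div x a) a := by rw [ea]
      _ = x := hx
  have h := hdiv2 b (div a a)
  rw [hleft b] at h
  exact h.symm
end

section
/- In an AG-group, left division exists and is given by a\b = (b·e)·a⁻¹: for all a, b, a·((b·e)·a⁻¹) = b, and if a·x = b then x = (b·e)·a⁻¹. -/
theorem AGgroup_left_div {G : Type*} (mul : G → G → G) (inv : G → G) (e : G)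
    (hAG : ∀ a b c, mul (mul a b) c = mul (mul c b) a)
    (he : ∀ a, mul e a = a)
    (hinv1 : ∀ a, mul a (inv a) = e) (hinv2 : ∀ a, mul (inv a) a = e) :
    ∀ a b, mul a (mul (mul b e) (inv a)) = b ∧
      ∀ x, mul a x = b → x = mul (mul b e) (inv a) := by
  -- ab = (ba)e
  have comm : ∀ a b, mul a b = mul (mul b a) e := by
    intro a b
    calc mul a b = mul (mul e a) b := by rw [he]
    _ = mul (mul b a) e := hAG e a b
  intro a b
  constructor
  · calc mul a (mul (mul b e) (inv a))
        = mul (mul (mul (mul b e) (inv a)) a) e := comm _ _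
    _ = mul (mul (mul a (inv a)) (mul b e)) e := by rw [hAG (mul b e) (inv a) a]
    _ = mul (mul e (mul b e)) e := by rw [hinv1]
    _ = mul (mul b e) e := by rw [he]
    _ = mul (mul e e) b := hAG b e e
    _ = b := by rw [he, he]
  · intro x hx
    have h1 : mul (mul b e) (inv a) = mul (mul x a) (inv a) := by
      rw [← hx, comm a x]
      calc mul (mul (mul (mul x a) e) e) (inv a)
          = mul (mul (mul e e) (mul x a)) (inv a) := by rw [hAG (mul x a) e e]
      _ = mul (mul x a) (inv a) := by rw [he, he]
    rw [h1, hAG, hinv2, he]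
end

section
/- Every AG-group is a quasigroup: for all a, b there exist unique x and y such that x·a = b and a·y = b. -/
theorem AGgroup_quasigroup {G : Type*} (mul : G → G → G) (inv : G → G) (e : G)
    (hAG : ∀ a b c, mul (mul a b) c = mul (mul c b) a)
    (he : ∀ a, mul e a = a)
    (hinv1 : ∀ a, mul a (inv a) = e) (hinv2 : ∀ a, mul (inv a) a = e) :
    ∀ a b, (∃! x, mul x a = b) ∧ (∃! y, mul a y = b) := by
  -- medial law
  have med : ∀ a b c d, mul (mul a b) (mul c d) = mul (mul a c) (mul b d) := by
    intro a b c d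
    rw [hAG a b (mul c d), hAG c d b, hAG (mul b d) c a]
  -- a(bc) = b(ac)
  have L : ∀ a b c, mul a (mul b c) = mul b (mul a c) := by
    intro a b c
    calc mul a (mul b c) = mul (mul e a) (mul b c) := by rw [he]
      _ = mul (mul e b) (mul a c) := med e a b c
      _ = mul b (mul a c) := by rw [he]
  intro a b
  constructor
  · refine ⟨mul b (inv a), ?_, ?_⟩
    · show mul (mul b (inv a)) a = b
      rw [hAG b (inv a) a, hinv1, he]
    · intro x hx
      rw [← hx, hAG x a (inv a), hinv2, he]
  · refine ⟨mul (mul (inv a) e) b, ?_, ?_⟩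
    · show mul a (mul (mul (inv a) e) b) = b
      rw [L a (mul (inv a) e) b, med (inv a) e a b, hinv2, he, he]
    · intro y hy
      rw [← hy, med (inv a) e a y, hinv2, he, he]
end

section
/- Let G be an AG-group and define a+b = (a·e)·b. Then + is associative: a+(b+c) = (a+b)+c for all a, b, c. -/
theorem AGgroup_add_assoc {G : Type*} (mul : G → G → G) (inv : G → G) (e : G)
    (hAG : ∀ a b c, mul (mul a b) c = mul (mul c b) a)
    (he : ∀ a, mul e a = a)
    (hinv1 : ∀ a, mul a (inv a) = e) (hinv2 : ∀ a, mul (inv a) a = e) :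
    ∀ a b c, mul (mul a e) (mul (mul b e) c) = mul (mul (mul (mul a e) b) e) c := by
  -- medial law: (ab)(cd) = (ac)(bd)
  have med : ∀ a b c d, mul (mul a b) (mul c d) = mul (mul a c) (mul b d) := by
    intro a b c d
    rw [hAG, hAG c d b, hAG]
  -- paramedial-ish: a(bc) = b(ac)
  have par : ∀ a b c, mul a (mul b c) = mul b (mul a c) := by
    intro a b c
    conv_lhs => rw [← he a]
    rw [med, he]
  intro a b c
  -- RHS: ((ae)b)e = b(ae)
  have h1 : mul (mul (mul a e) b) e = mul b (mul a e) := by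
    rw [hAG, he]
  rw [h1]
  -- LHS: (ae)((be)c) = (a(be))(ec) = (a(be))c
  conv_lhs => rw [← he c]
  rw [med, par a b, he, he]
end

section
/- Let G be an AG-group with operations a+b = (a·e)·b, neg(a) = (a·e)⁻¹, zero = e, and φ(a) = a·e. Then (G, +, neg, e) is an abelian group and φ is a group automorphism of (G,+) with φ∘φ = id. -/
theorem AGgroup_to_module {G : Type*} (mul : G → G → G) (inv : G → G) (e : G)
    (hAG : ∀ a b c, mul (mul a b) c = mul (mul c b) a)
    (he : ∀ a, mul e a = a)
    (hinv1 : ∀ a, mul a (inv a) = e) (hinv2 : ∀ a, mul (inv a) a = e) :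
    let add : G → G → G := fun a b => mul (mul a e) b
    let neg : G → G := fun a => inv (mul a e)
    let φ : G → G := fun a => mul a e
    (∀ a b, add a b = add b a) ∧
    (∀ a b c, add a (add b c) = add (add a b) c) ∧
    (∀ a, add e a = a) ∧
    (∀ a, add a (neg a) = e) ∧
    Function.Bijective φ ∧
    (∀ a b, φ (add a b) = add (φ a) (φ b)) ∧
    (∀ a, φ (φ a) = a) := by
  intro add neg φ
  -- f(x·y) = y·x
  have hf : ∀ x y, mul (mul x y) e = mul y x := by
    intro x y; rw [hAG, he]
  -- medial law
  have hmed : ∀ a b c d, mul (mul a b) (mul c d) = mul (mul a c) (mul b d) := by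
    intro a b c d
    calc mul (mul a b) (mul c d) = mul (mul (mul c d) b) a := hAG ..
      _ = mul (mul (mul b d) c) a := by rw [hAG c d b]
      _ = mul (mul a c) (mul b d) := hAG ..
  -- key: a·(b·e) = b·(a·e)
  have hkey : ∀ a b, mul a (mul b e) = mul b (mul a e) := by
    intro a b
    calc mul a (mul b e) = mul (mul e a) (mul b e) := by rw [he]
      _ = mul (mul e b) (mul a e) := hmed ..
      _ = mul b (mul a e) := by rw [he]
  have hidem : ∀ a, mul (mul a e) e = a := by
    intro a; rw [hf, he]
  have hφφ : ∀ a, φ (φ a) = a := hidem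
  refine ⟨fun a b => hAG a e b, ?_, fun a => by simp only [add, he, he e], fun a => hinv1 _,
    Function.Involutive.bijective hφφ, ?_, hφφ⟩
  · intro a b c
    show mul (mul a e) (mul (mul b e) c) = mul (mul (mul (mul a e) b) e) c
    rw [hf (mul a e) b, hAG a e (mul (mul b e) c), hf (mul b e) c, hAG,
      hAG b (mul a e) c, hkey c a, hAG a (mul b e) c, hAG a (mul c e) b, hkey c b]
  · intro a b
    show mul (mul (mul a e) b) e = mul (mul (mul a e) e) (mul b e)
    rw [hf, hidem, hkey b a]
end

section
/- Let (G,+) be an abelian group and φ : G → G an automorphism with φ∘φ = id. Define a·b = φ(a)+b, a⁻¹ = φ(-a), e = 0. Then (G, ·, ⁻¹, e) is an AG-group: (a·b)·c = (c·b)·a, e·a = a, and a·a⁻¹ = a⁻¹·a = e for all a,b,c. -/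
theorem module_to_AGgroup {G : Type*} [AddCommGroup G] (φ : G →+ G)
    (hφ : ∀ a, φ (φ a) = a) :
    let mul : G → G → G := fun a b => φ a + b
    let inv : G → G := fun a => φ (-a)
    let e : G := 0
    (∀ a b c, mul (mul a b) c = mul (mul c b) a) ∧
    (∀ a, mul e a = a) ∧
    (∀ a, mul a (inv a) = e) ∧ (∀ a, mul (inv a) a = e) := by
  refine ⟨?_, ?_, ?_, ?_⟩ <;> intros <;> simp [map_add, hφ, map_neg] <;> abel
end

section
/- A groupoid (G,·) is an AG-group (admits ⁻¹ and e making it an AG-group) if and only if there exists an abelian group structure (G,+) and an automorphism φ of (G,+) with φ∘φ = id such that a·b = φ(a)+b for all a, b. -/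
theorem AGgroup_iff_linear {G : Type*} (mul : G → G → G) :
    (∃ (inv : G → G) (e : G),
      (∀ a b c, mul (mul a b) c = mul (mul c b) a) ∧
      (∀ a, mul e a = a) ∧
      (∀ a, mul a (inv a) = e) ∧ (∀ a, mul (inv a) a = e)) ↔
    (∃ (add : G → G → G) (neg : G → G) (zero : G) (φ : G → G),
      (∀ a b, add a b = add b a) ∧
      (∀ a b c, add a (add b c) = add (add a b) c) ∧
      (∀ a, add zero a = a) ∧
      (∀ a, add a (neg a) = zero) ∧
      Function.Bijective φ ∧
      (∀ a b, φ (add a b) = add (φ a) (φ b)) ∧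
      (∀ a, φ (φ a) = a) ∧
      (∀ a b, mul a b = add (φ a) b)) := by
  constructor
  · rintro ⟨inv, e, L, lid, rinv, linv⟩
    set φ : G → G := fun a => mul a e with hφ
    have hee : mul e e = e := lid e
    have hinvol : ∀ a, mul (mul a e) e = a := by
      intro a; rw [L, hee, lid]
    have swap : ∀ a b c, mul a (mul b c) = mul b (mul a c) := by
      intro a b c
      calc mul a (mul b c) = mul (mul e a) (mul b c) := by rw [lid]
        _ = mul (mul (mul b c) a) e := L e a (mul b c)
        _ = mul (mul (mul a c) b) e := by rw [L b c a]
        _ = mul (mul e b) (mul a c) := (L e b (mul a c)).symm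
        _ = mul b (mul a c) := by rw [lid]
    set add : G → G → G := fun a b => mul (mul a e) b with hadd
    refine ⟨add, fun a => inv (mul a e), e, φ, ?_, ?_, ?_, ?_, ?_, ?_, hinvol, ?_⟩
    · intro a b; exact L a e b
    · intro a b c
      show mul (mul a e) (mul (mul b e) c) = mul (mul (mul (mul a e) b) e) c
      calc mul (mul a e) (mul (mul b e) c)
          = mul (mul b e) (mul (mul a e) c) := swap _ _ _
        _ = mul (mul b e) (mul (mul c e) a) := by rw [L a e c]
        _ = mul (mul c e) (mul (mul b e) a) := swap _ _ _
        _ = mul (mul c e) (mul (mul a e) b) := by rw [L b e a]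
        _ = mul (mul (mul (mul a e) b) e) c := (L _ e c).symm
    · intro a; show mul (mul e e) a = a; rw [hee, lid]
    · intro a; show mul (mul a e) (inv (mul a e)) = e; exact rinv _
    · exact Function.Involutive.bijective hinvol
    · intro a b
      show mul (mul (mul a e) b) e = mul (mul (mul a e) e) (mul b e)
      rw [hinvol a]
      calc mul (mul (mul a e) b) e = mul (mul e b) (mul a e) := (L e b (mul a e)).symm
        _ = mul b (mul a e) := by rw [lid]
        _ = mul a (mul b e) := swap b a e
    · intro a b
      show mul a b = mul (mul (mul a e) e) b
      rw [hinvol a]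
  · rintro ⟨add, neg, zero, φ, comm, assoc, zid, rneg, _, hom, invol, hmul⟩
    have h : add (φ zero) (φ zero) = φ zero := by
      have := hom zero zero; rw [zid] at this; exact this.symm
    have φ0 : φ zero = zero := by
      have : zero = φ zero := by
        calc zero = add (φ zero) (neg (φ zero)) := (rneg _).symm
          _ = add (add (φ zero) (φ zero)) (neg (φ zero)) := by rw [h]
          _ = add (φ zero) (add (φ zero) (neg (φ zero))) := (assoc _ _ _).symm
          _ = add (φ zero) zero := by rw [rneg]
          _ = φ zero := by rw [comm]; exact zid _
      exact this.symm
    refine ⟨fun a => φ (neg a), zero, ?_, ?_, ?_, ?_⟩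
    · intro a b c
      simp only [hmul, hom, invol]
      rw [comm a (φ b), comm c (φ b), ← assoc, ← assoc, comm a c]
    · intro a; rw [hmul, φ0, zid]
    · intro a; rw [hmul, ← hom, rneg, φ0]
    · intro a; rw [hmul, invol, comm, rneg]
end

section
/- Let G be an AG-group and H a sub-AG-group. Then the relation a ∼ b iff b⁻¹·a ∈ H is an equivalence relation on G that is compatible with the operation · (i.e., it is a congruence). -/
theorem subAGgroup_congruence {G : Type*} (mul : G → G → G) (inv : G → G) (e : G)
    (hAG : ∀ a b c, mul (mul a b) c = mul (mul c b) a)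
    (he : ∀ a, mul e a = a)
    (hinv1 : ∀ a, mul a (inv a) = e) (hinv2 : ∀ a, mul (inv a) a = e)
    (H : Set G)
    (Hmul : ∀ a ∈ H, ∀ b ∈ H, mul a b ∈ H)
    (Hinv : ∀ a ∈ H, inv a ∈ H)
    (He : e ∈ H) :
    Equivalence (fun a b => mul (inv b) a ∈ H) ∧
    ∀ a b c d, mul (inv b) a ∈ H → mul (inv d) c ∈ H →
      mul (inv (mul b d)) (mul a c) ∈ H := by
  have medial : ∀ a b c d, mul (mul a b) (mul c d) = mul (mul a c) (mul b d) := by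
    intro a b c d
    rw [hAG a b (mul c d), hAG c d b, hAG (mul b d) c a]
  have uniq : ∀ x y, mul y x = e → y = inv x := by
    intro x y h
    calc y = mul e y := (he y).symm
      _ = mul (mul (inv x) x) y := by rw [hinv2]
      _ = mul (mul y x) (inv x) := hAG (inv x) x y
      _ = inv x := by rw [h, he]
  have inv_inv : ∀ x, inv (inv x) = x := fun x => (uniq (inv x) x (hinv1 x)).symm
  have inv_mul : ∀ x y, inv (mul x y) = mul (inv x) (inv y) := by
    intro x y
    refine (uniq _ _ ?_).symm
    rw [medial, hinv2, hinv2, he]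
  have swapH : ∀ x y, mul x y ∈ H → mul y x ∈ H := by
    intro x y h
    have : mul y x = mul (mul x y) e := by rw [hAG x y e, he]
    rw [this]
    exact Hmul _ h _ He
  constructor
  · refine ⟨fun a => ?_, fun {a b} h => ?_, fun {a b c} h1 h2 => ?_⟩
    · rw [hinv2]; exact He
    · have h2 : mul b (inv a) ∈ H := by
        have := Hinv _ h
        rwa [inv_mul, inv_inv] at this
      exact swapH _ _ h2
    · have hab : mul a (inv b) ∈ H := swapH _ _ h1
      have hm : mul (mul (inv c) b) (mul a (inv b)) ∈ H := Hmul _ h2 _ hab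
      rw [medial, hinv1] at hm
      have := swapH _ _ hm
      rwa [he] at this
  · intro a b c d h1 h2
    rw [inv_mul, medial]
    exact Hmul _ h1 _ h2
end

section
/- Let G and H be abelian groups with involutory automorphisms φ and ψ respectively. A bijection f : G → H satisfies f(φ(a)+b) = ψ(f(a))+f(b) for all a,b (i.e., f is an isomorphism of the associated AG-groups) if and only if f is a group isomorphism from (G,+) to (H,+) and ψ = f∘φ∘f⁻¹. -/
theorem AG_iso_char {G H : Type*} [AddCommGroup G] [AddCommGroup H]
    (φ : G →+ G) (hφ : ∀ a, φ (φ a) = a)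
    (ψ : H →+ H) (hψ : ∀ a, ψ (ψ a) = a)
    (f : G ≃ H) :
    (∀ a b, f (φ a + b) = ψ (f a) + f b) ↔
    ((∀ a b, f (a + b) = f a + f b) ∧ ∀ h, ψ h = f (φ (f.symm h))) := by
  constructor
  · intro hf
    have h0 : ψ (f 0) = 0 := by
      have h := hf 0 0
      rw [map_zero, add_zero] at h
      exact add_right_cancel (h.symm.trans (zero_add (f 0)).symm)
    have hf0 : f 0 = 0 := by
      have := hψ (f 0)
      rw [h0, map_zero] at this; exact this.symm
    have hφψ : ∀ a, f (φ a) = ψ (f a) := by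
      intro a
      have := hf a 0
      simpa [hf0] using this
    have hadd : ∀ a b, f (a + b) = f a + f b := by
      intro a b
      have := hf (φ a) b
      rwa [hφ, hφψ, hψ] at this
    refine ⟨hadd, fun h => ?_⟩
    conv_lhs => rw [← f.apply_symm_apply h]
    rw [← hφψ]
  · rintro ⟨hadd, hpsi⟩ a b
    rw [hadd, hpsi (f a), f.symm_apply_apply]
end

section
/- There are exactly two AG-groups of prime order p > 2 up to isomorphism: AG(Z/p, id) and AG(Z/p, x ↦ -x); equivalently, the only k ∈ (Z/p)* with k² = 1 are k = 1 and k = -1, and these give non-isomorphic AG-groups. -/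
theorem AGgroups_of_prime_order (p : ℕ) (hp : p.Prime) (hodd : p ≠ 2) :
    ({k : ZMod p | k ^ 2 = 1} = {1, -1}) ∧
    (1 : ZMod p) ≠ -1 ∧
    ¬∃ f : ZMod p ≃ ZMod p, ∀ a b : ZMod p, f (a + b) = -(f a) + f b := by
  haveI : Fact p.Prime := ⟨hp⟩
  have h2 : (2 : ZMod p) ≠ 0 := by
    have : ((2 : ℕ) : ZMod p) ≠ 0 := by
      rw [Ne, ZMod.natCast_eq_zero_iff]
      intro h
      exact hodd ((Nat.prime_dvd_prime_iff_eq hp Nat.prime_two).mp h)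
    simpa using this
  refine ⟨?_, ?_, ?_⟩
  · ext k
    simp [sq, mul_self_eq_one_iff]
  · intro h
    exact h2 (by linear_combination h)
  · rintro ⟨f, hf⟩
    have h0 : f 0 = 0 := by have := hf 0 0; simpa using this
    have hall : ∀ a, f a = 0 := by
      intro a
      have := hf a 0
      rw [add_zero, h0, add_zero] at this
      have h2a : 2 * f a = 0 := by rw [two_mul]; nth_rewrite 1 [this]; ring
      rcases mul_eq_zero.mp h2a with h | h
      · exact absurd h h2
      · exact h
    have : (0 : ZMod p) = 1 := f.injective (by rw [hall 0, hall 1])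
    exact zero_ne_one this
end
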